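/- Let h, u, v : ℝ² → ℝ be C¹, and fix constants H > 0, U, V, g > 0, f_c. Define F = H(u,v) + h(U,V), G = U u + V v + g h, ω = ∂v/∂x − ∂u/∂y, and e = (1/2)H(u²+v²) + (1/2) g h². If ∂h/∂t + div F = 0 and ∂(u,v)/∂t + ω(−V, U) + f_c(−v, u) + ∇G = 0, then ∂e/∂t + div(g H h (u,v) + e (U,V)) = 0. -/

import Mathlib

/-- Partial derivative in time of a field `f t x y`. -/
noncomputable def pt (f : ℝ → ℝ → ℝ → ℝ) (t x y : ℝ) : ℝ :=
  deriv (fun s => f s x y) t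

/-- Partial derivative in `x` of a field `f t x y`. -/
noncomputable def px (f : ℝ → ℝ → ℝ → ℝ) (t x y : ℝ) : ℝ :=
  deriv (fun s => f t s y) x

/-- Partial derivative in `y` of a field `f t x y`. -/
noncomputable def py (f : ℝ → ℝ → ℝ → ℝ) (t x y : ℝ) : ℝ :=
  deriv (fun s => f t x s) y

/-!
Take `H u` times the first momentum equation, `H v` times the second and `g h` times the mass
equation and add them. The Coriolis terms cancel, being orthogonal to `(u, v)`, and the vorticity
term `H ω (V u - U v)` combines with `-H (u, v) · ∇(U u + V v)` into `-(U, V) · ∇(H (u² + v²) / 2)`;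
what remains is the product rule expansion of the energy flux divergence.
-/

theorem hasDerivAt_pt {f : ℝ → ℝ → ℝ → ℝ}
    (hf : Differentiable ℝ (fun p : ℝ × ℝ × ℝ => f p.1 p.2.1 p.2.2)) (t x y : ℝ) :
    HasDerivAt (fun s => f s x y) (pt f t x y) t :=
  DifferentiableAt.hasDerivAt <|
    hf.comp (differentiable_id.prodMk (differentiable_const (x, y))) t

theorem hasDerivAt_px {f : ℝ → ℝ → ℝ → ℝ}
    (hf : Differentiable ℝ (fun p : ℝ × ℝ × ℝ => f p.1 p.2.1 p.2.2)) (t x y : ℝ) :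
    HasDerivAt (fun s => f t s y) (px f t x y) x :=
  DifferentiableAt.hasDerivAt <|
    hf.comp ((differentiable_const t).prodMk (differentiable_id.prodMk (differentiable_const y))) x

theorem hasDerivAt_py {f : ℝ → ℝ → ℝ → ℝ}
    (hf : Differentiable ℝ (fun p : ℝ × ℝ × ℝ => f p.1 p.2.1 p.2.2)) (t x y : ℝ) :
    HasDerivAt (fun s => f t x s) (py f t x y) y :=
  DifferentiableAt.hasDerivAt <|
    hf.comp ((differentiable_const t).prodMk ((differentiable_const x).prodMk differentiable_id)) y

theorem pt_eq_of_hasDerivAt {f : ℝ → ℝ → ℝ → ℝ} {φ : ℝ → ℝ} {φ' t x y : ℝ}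
    (hf : ∀ s, f s x y = φ s) (hφ : HasDerivAt φ φ' t) : pt f t x y = φ' := by
  rw [pt, funext hf, hφ.deriv]

theorem px_eq_of_hasDerivAt {f : ℝ → ℝ → ℝ → ℝ} {φ : ℝ → ℝ} {φ' t x y : ℝ}
    (hf : ∀ s, f t s y = φ s) (hφ : HasDerivAt φ φ' x) : px f t x y = φ' := by
  rw [px, funext hf, hφ.deriv]

theorem py_eq_of_hasDerivAt {f : ℝ → ℝ → ℝ → ℝ} {φ : ℝ → ℝ} {φ' t x y : ℝ}
    (hf : ∀ s, f t x s = φ s) (hφ : HasDerivAt φ φ' y) : py f t x y = φ' := by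
  rw [py, funext hf, hφ.deriv]

theorem hasDerivAt_energy {h u v : ℝ → ℝ} {h' u' v' s : ℝ} (H g : ℝ)
    (hh : HasDerivAt h h' s) (hu : HasDerivAt u u' s) (hv : HasDerivAt v v' s) :
    HasDerivAt (fun s => 1 / 2 * H * (u s ^ 2 + v s ^ 2) + 1 / 2 * g * h s ^ 2)
      (H * u s * u' + H * v s * v' + g * h s * h') s :=
  ((((hu.fun_pow 2).fun_add (hv.fun_pow 2)).const_mul (1 / 2 * H)).fun_add
    ((hh.fun_pow 2).const_mul (1 / 2 * g))).congr_deriv (by push_cast; ring)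

theorem linear_energy_continuity_general (g fc H U V : ℝ)
    (h u v : ℝ → ℝ → ℝ → ℝ)
    (hC1h : ContDiff ℝ 1 (fun p : ℝ × ℝ × ℝ => h p.1 p.2.1 p.2.2))
    (hC1u : ContDiff ℝ 1 (fun p : ℝ × ℝ × ℝ => u p.1 p.2.1 p.2.2))
    (hC1v : ContDiff ℝ 1 (fun p : ℝ × ℝ × ℝ => v p.1 p.2.1 p.2.2))
    (F1 F2 G ω e : ℝ → ℝ → ℝ → ℝ)
    (hF1 : ∀ t x y, F1 t x y = H * u t x y + U * h t x y)
    (hF2 : ∀ t x y, F2 t x y = H * v t x y + V * h t x y)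
    (hG : ∀ t x y, G t x y = U * u t x y + V * v t x y + g * h t x y)
    (hω : ∀ t x y, ω t x y = px v t x y - py u t x y)
    (he : ∀ t x y,
      e t x y = (1 / 2) * H * (u t x y ^ 2 + v t x y ^ 2)
        + (1 / 2) * g * h t x y ^ 2)
    (mass : ∀ t x y, pt h t x y + px F1 t x y + py F2 t x y = 0)
    (momu : ∀ t x y, pt u t x y + ω t x y * (-V) + fc * (-(v t x y)) + px G t x y = 0)
    (momv : ∀ t x y, pt v t x y + ω t x y * U + fc * u t x y + py G t x y = 0) :
    ∀ t x y,
      pt e t x y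
        + px (fun t x y => g * H * h t x y * u t x y + e t x y * U) t x y
        + py (fun t x y => g * H * h t x y * v t x y + e t x y * V) t x y = 0 := by
  intro t x y
  have ht {f : ℝ → ℝ → ℝ → ℝ} (hf : ContDiff ℝ 1 (fun p : ℝ × ℝ × ℝ => f p.1 p.2.1 p.2.2)) :=
    hasDerivAt_pt (hf.differentiable one_ne_zero) t x y
  have hx {f : ℝ → ℝ → ℝ → ℝ} (hf : ContDiff ℝ 1 (fun p : ℝ × ℝ × ℝ => f p.1 p.2.1 p.2.2)) :=
    hasDerivAt_px (hf.differentiable one_ne_zero) t x y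
  have hy {f : ℝ → ℝ → ℝ → ℝ} (hf : ContDiff ℝ 1 (fun p : ℝ × ℝ × ℝ => f p.1 p.2.1 p.2.2)) :=
    hasDerivAt_py (hf.differentiable one_ne_zero) t x y
  have mass := mass t x y
  have momu := momu t x y
  have momv := momv t x y
  rw [px_eq_of_hasDerivAt (hF1 t · y) (((hx hC1u).const_mul H).fun_add ((hx hC1h).const_mul U)),
    py_eq_of_hasDerivAt (hF2 t x) (((hy hC1v).const_mul H).fun_add ((hy hC1h).const_mul V))]
    at mass
  rw [hω, px_eq_of_hasDerivAt (hG t · y) ((((hx hC1u).const_mul U).fun_add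
    ((hx hC1v).const_mul V)).fun_add ((hx hC1h).const_mul g))] at momu
  rw [hω, py_eq_of_hasDerivAt (hG t x) ((((hy hC1u).const_mul U).fun_add
    ((hy hC1v).const_mul V)).fun_add ((hy hC1h).const_mul g))] at momv
  rw [pt_eq_of_hasDerivAt (he · x y) (hasDerivAt_energy H g (ht hC1h) (ht hC1u) (ht hC1v)),
    px_eq_of_hasDerivAt (fun s => by rw [he])
      ((((hx hC1h).const_mul (g * H)).fun_mul (hx hC1u)).fun_add
        ((hasDerivAt_energy H g (hx hC1h) (hx hC1u) (hx hC1v)).mul_const U)),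
    py_eq_of_hasDerivAt (fun s => by rw [he])
      ((((hy hC1h).const_mul (g * H)).fun_mul (hy hC1v)).fun_add
        ((hasDerivAt_energy H g (hy hC1h) (hy hC1u) (hy hC1v)).mul_const V))]
  linear_combination (H * u t x y) * momu + (H * v t x y) * momv + (g * h t x y) * mass

theorem linear_energy_continuity (g fc H U V : ℝ) (hg : 0 < g) (hH : 0 < H)
    (h u v : ℝ → ℝ → ℝ → ℝ)
    (hC1h : ContDiff ℝ 1 (fun p : ℝ × ℝ × ℝ => h p.1 p.2.1 p.2.2))
    (hC1u : ContDiff ℝ 1 (fun p : ℝ × ℝ × ℝ => u p.1 p.2.1 p.2.2))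
    (hC1v : ContDiff ℝ 1 (fun p : ℝ × ℝ × ℝ => v p.1 p.2.1 p.2.2))
    (F1 F2 G ω e : ℝ → ℝ → ℝ → ℝ)
    (hF1 : ∀ t x y, F1 t x y = H * u t x y + U * h t x y)
    (hF2 : ∀ t x y, F2 t x y = H * v t x y + V * h t x y)
    (hG : ∀ t x y, G t x y = U * u t x y + V * v t x y + g * h t x y)
    (hω : ∀ t x y, ω t x y = px v t x y - py u t x y)
    (he : ∀ t x y,
      e t x y = (1 / 2) * H * (u t x y ^ 2 + v t x y ^ 2)
        + (1 / 2) * g * h t x y ^ 2)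
    (mass : ∀ t x y, pt h t x y + px F1 t x y + py F2 t x y = 0)
    (momu : ∀ t x y, pt u t x y + ω t x y * (-V) + fc * (-(v t x y)) + px G t x y = 0)
    (momv : ∀ t x y, pt v t x y + ω t x y * U + fc * u t x y + py G t x y = 0) :
    ∀ t x y,
      pt e t x y
        + px (fun t x y => g * H * h t x y * u t x y + e t x y * U) t x y
        + py (fun t x y => g * H * h t x y * v t x y + e t x y * V) t x y = 0 :=
  linear_energy_continuity_general g fc H U V h u v hC1h hC1u hC1v F1 F2 G ω e hF1 hF2 hG hω he mass
    momu momv
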